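/- arXiv:1608.04317 — 2 statements merged into one kernel-verified Lean document; each statement's English description precedes it below -/
import Mathlib

section
/- For each integer n ≥ 1 there exists a solution μ of the transcendental equation sin(μ)(μ² − 1) = 2μ cos(μ) with (n−1)π ≤ μ ≤ nπ. Consequently the eigenvalues λ_n = μ_n² of the Sturm-Liouville problem satisfy λ_n ≥ (n−1)²π², so λ_n grows like n²π². -/
open Real Set

lemma cos_nat_pi (k : ℕ) : Real.cos (k * π) = (-1) ^ k := by
  have := Real.cos_nat_mul_pi_sub 0 k
  simpa using this

/-- For each n ≥ 1 there is a solution μ of sin(μ)(μ²−1) = 2μ cos(μ) with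
(n−1)π ≤ μ ≤ nπ; consequently the eigenvalue λ_n = μ² satisfies λ_n ≥ (n−1)²π². -/
theorem transcendental_equation_has_solution_in_each_window (n : ℕ) (hn : 1 ≤ n) :
    ∃ μ : ℝ, ((n : ℝ) - 1) * Real.pi ≤ μ ∧ μ ≤ (n : ℝ) * Real.pi ∧
      Real.sin μ * (μ ^ 2 - 1) = 2 * μ * Real.cos μ ∧
      (((n : ℝ) - 1) * Real.pi) ^ 2 ≤ μ ^ 2 := by
  set f : ℝ → ℝ := fun μ => Real.sin μ * (μ ^ 2 - 1) - 2 * μ * Real.cos μ with hf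
  set a : ℝ := ((n : ℝ) - 1) * π with ha
  set b : ℝ := (n : ℝ) * π with hb
  have hcast : ((n : ℝ) - 1) = ((n - 1 : ℕ) : ℝ) := by
    push_cast [Nat.cast_sub hn]; ring
  have hab : a ≤ b := by
    have : ((n : ℝ) - 1) ≤ n := by linarith
    exact mul_le_mul_of_nonneg_right this pi_pos.le
  have hcf : ContinuousOn f (Icc a b) := by fun_prop
  have ha0 : 0 ≤ a := by
    rw [ha, hcast]; positivity
  have hfa : f a = -(2 * a * (-1) ^ (n - 1)) := by
    rw [hf, ha, hcast]
    simp [Real.sin_nat_mul_pi, cos_nat_pi]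
  have hfb : f b = -(2 * b * (-1) ^ n) := by
    rw [hf, hb]
    simp [Real.sin_nat_mul_pi, cos_nat_pi]
  have hb0 : 0 ≤ b := le_trans ha0 hab
  have key : ∃ μ ∈ Icc a b, f μ = 0 := by
    rcases Nat.even_or_odd n with he | ho
    · -- n even: (-1)^n = 1, (-1)^(n-1) = -1 ; f a ≥ 0, f b ≤ 0
      have h1 : f a = 2 * a := by
        rw [hfa, Odd.neg_one_pow (Nat.Even.sub_odd hn he odd_one)]; ring
      have h2 : f b = -(2 * b) := by rw [hfb, he.neg_one_pow]; ring
      have : (0 : ℝ) ∈ Icc (f b) (f a) := by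
        constructor <;> [rw [h2]; rw [h1]] <;> linarith
      obtain ⟨μ, hμ, hμ0⟩ := intermediate_value_Icc' hab hcf this
      exact ⟨μ, hμ, hμ0⟩
    · -- n odd
      have h1 : f a = -(2 * a) := by
        rw [hfa, Even.neg_one_pow (Nat.Odd.sub_odd ho odd_one)]; ring
      have h2 : f b = 2 * b := by rw [hfb, ho.neg_one_pow]; ring
      have : (0 : ℝ) ∈ Icc (f a) (f b) := by
        constructor <;> [rw [h1]; rw [h2]] <;> linarith
      obtain ⟨μ, hμ, hμ0⟩ := intermediate_value_Icc hab hcf this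
      exact ⟨μ, hμ, hμ0⟩
  obtain ⟨μ, ⟨hμa, hμb⟩, hμ0⟩ := key
  refine ⟨μ, hμa, hμb, by simpa [hf, sub_eq_zero] using hμ0, ?_⟩
  exact pow_le_pow_left₀ ha0 hμa 2
end

section
/- The function Ψ_n(u) = A_n(sin(√λ_n u) + √λ_n cos(√λ_n u)), where λ_n > 0 satisfies sin(√λ_n)(λ_n − 1) = 2√λ_n cos(√λ_n), satisfies for every k ≥ 0: the (2k+1)-th derivative at 0 equals the (2k)-th derivative at 0, and the (2k+1)-th derivative at 1 equals minus the (2k)-th derivative at 1. In other words, Ψ_n belongs to the test function space 𝒮. -/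
/-!
Ψ is a combination of `sin (√λ u)` and `cos (√λ u)`, so `Ψ'' = -λ Ψ`. Hence every even-order
derivative of Ψ is `(-λ)^k Ψ` and every odd-order one is `(-λ)^k Ψ'`, and the conditions of 𝒮
at all orders reduce to the Robin conditions `Ψ'(0) = Ψ(0)`, `Ψ'(1) = -Ψ(1)`. The first is
immediate; the second is exactly the eigenvalue equation `sin √λ (λ - 1) = 2 √λ cos √λ`.
-/

open Real

section SecondOrder

variable {𝕜 F : Type*} [NontriviallyNormedField 𝕜] [NormedAddCommGroup F] [NormedSpace 𝕜 F]
  {f : 𝕜 → F} {c : 𝕜}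

theorem iteratedDeriv_two_mul_of_deriv_deriv_eq_smul (hf : deriv (deriv f) = c • f) (k : ℕ) :
    iteratedDeriv (2 * k) f = c ^ k • f ∧ iteratedDeriv (2 * k + 1) f = c ^ k • deriv f := by
  have deriv_smul (a : 𝕜) (g : 𝕜 → F) : deriv (a • g) = a • deriv g :=
    funext fun _ => deriv_const_smul_field a g
  induction k with
  | zero => simp
  | succ k ih =>
    have h_even : iteratedDeriv (2 * (k + 1)) f = c ^ (k + 1) • f := by
      rw [show 2 * (k + 1) = 2 * k + 1 + 1 by ring, iteratedDeriv_succ, ih.2, deriv_smul, hf,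
        smul_smul, pow_succ]
    refine ⟨h_even, ?_⟩
    rw [iteratedDeriv_succ, h_even, deriv_smul]

theorem iteratedDeriv_two_mul_add_one_eq_smul_of_deriv_eq_smul (hf : deriv (deriv f) = c • f)
    {x α : 𝕜} (hx : deriv f x = α • f x) (k : ℕ) :
    iteratedDeriv (2 * k + 1) f x = α • iteratedDeriv (2 * k) f x := by
  obtain ⟨h_even, h_odd⟩ := iteratedDeriv_two_mul_of_deriv_deriv_eq_smul hf k
  rw [h_even, h_odd, Pi.smul_apply, Pi.smul_apply, hx, smul_comm]

end SecondOrder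

theorem deriv_sin_mul_add_cos_mul (a b s : ℝ) :
    deriv (fun u => a * sin (s * u) + b * cos (s * u))
      = fun u => -(s * b) * sin (s * u) + s * a * cos (s * u) := by
  funext u
  have hsu : HasDerivAt (fun u => s * u) s u := by simpa using (hasDerivAt_id u).const_mul s
  have := (((hasDerivAt_sin _).comp u hsu).const_mul a).add
    (((hasDerivAt_cos _).comp u hsu).const_mul b)
  exact this.deriv.trans (by ring)

theorem deriv_deriv_sin_mul_add_cos_mul (a b s : ℝ) :
    deriv (deriv fun u => a * sin (s * u) + b * cos (s * u))
      = (-s ^ 2) • fun u => a * sin (s * u) + b * cos (s * u) := by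
  rw [deriv_sin_mul_add_cos_mul, deriv_sin_mul_add_cos_mul]
  funext u
  simp only [Pi.smul_apply, smul_eq_mul]
  ring

/-- The eigenfunctions Ψ_n(u) = A(sin(√λ u) + √λ cos(√λ u)), with λ > 0 solving
sin(√λ)(λ−1) = 2√λ cos(√λ), belong to the test function space 𝒮: for all k ≥ 0,
Ψ^{(2k+1)}(0) = Ψ^{(2k)}(0) and Ψ^{(2k+1)}(1) = -Ψ^{(2k)}(1). -/
theorem eigenfunctions_belong_to_test_space
    (lam A : ℝ) (hlam : 0 < lam)
    (heq : Real.sin (Real.sqrt lam) * (lam - 1)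
        = 2 * Real.sqrt lam * Real.cos (Real.sqrt lam)) :
    let Ψ : ℝ → ℝ := fun u => A * (Real.sin (Real.sqrt lam * u)
        + Real.sqrt lam * Real.cos (Real.sqrt lam * u))
    ∀ k : ℕ,
      iteratedDeriv (2 * k + 1) Ψ 0 = iteratedDeriv (2 * k) Ψ 0 ∧
      iteratedDeriv (2 * k + 1) Ψ 1 = - iteratedDeriv (2 * k) Ψ 1 := by
  intro Ψ k
  set s := √lam
  have hs : s ^ 2 = lam := sq_sqrt hlam.le
  have hΨ : Ψ = fun u => A * sin (s * u) + A * s * cos (s * u) := by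
    funext u
    ring
  have hΨ'' : deriv (deriv Ψ) = (-s ^ 2) • Ψ := hΨ ▸ deriv_deriv_sin_mul_add_cos_mul A (A * s) s
  have robin_zero : deriv Ψ 0 = (1 : ℝ) • Ψ 0 := by
    simp only [hΨ, deriv_sin_mul_add_cos_mul, mul_zero, sin_zero, cos_zero, smul_eq_mul]
    ring
  have robin_one : deriv Ψ 1 = (-1 : ℝ) • Ψ 1 := by
    simp only [hΨ, deriv_sin_mul_add_cos_mul, mul_one, smul_eq_mul]
    rw [← hs] at heq
    linear_combination -A * heq
  constructor
  · simpa using iteratedDeriv_two_mul_add_one_eq_smul_of_deriv_eq_smul hΨ'' robin_zero k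
  · simpa using iteratedDeriv_two_mul_add_one_eq_smul_of_deriv_eq_smul hΨ'' robin_one k
end
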